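/- Let G be a finite directed graph and s a vertex of G from which no non-sink-cycle (cycle containing some vertex of out-degree at least 2) is reachable. Then every infinite path in G starting at s eventually remains forever within a single sink-cycle, i.e., there is an index N and a sink-cycle C such that all vertices of the path from position N on lie on C. -/

import Mathlib

section Digraph

variable {V : Type}

/-- Out-degree at least 2: two different successors. -/
def OutDegGeTwo (R : V → V → Prop) (v : V) : Prop :=
  ∃ t₁ t₂, t₁ ≠ t₂ ∧ R v t₁ ∧ R v t₂

/-- Out-degree exactly one: a unique successor. -/
def OutDegOne (R : V → V → Prop) (v : V) : Prop :=
  ∃! t, R v t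

/-- A (simple) cycle: a nonempty duplicate-free list, consecutive vertices related by `R`,
and an edge from the last vertex back to the first. -/
def IsCycle (R : V → V → Prop) (l : List V) : Prop :=
  l ≠ [] ∧ l.Nodup ∧ l.Chain' R ∧
    ∃ a b, l.head? = some a ∧ l.getLast? = some b ∧ R b a

/-- A sink-cycle: a cycle all of whose vertices have out-degree 1. -/
def IsSinkCycle (R : V → V → Prop) (l : List V) : Prop :=
  IsCycle R l ∧ ∀ v ∈ l, OutDegOne R v

/-- A non-sink-cycle: a cycle containing a vertex of out-degree at least 2. -/
def IsNonSinkCycle (R : V → V → Prop) (l : List V) : Prop :=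
  IsCycle R l ∧ ∃ v ∈ l, OutDegGeTwo R v

end Digraph

/-!
By pigeonhole the path repeats a vertex; take a repetition `π m = π (m + d)` with the gap `d`
as small as possible over all such pairs. Then `π m, …, π (m + d - 1)` are distinct and form a
cycle, all of whose vertices are reachable from `s`. Since no non-sink-cycle is reachable, every
vertex of this cycle has a unique successor, so from time `m` on the path is forced to go round
the cycle forever.
-/

variable {V : Type}

theorem reflTransGen_of_path {R : V → V → Prop} {π : ℕ → V} (hπ : ∀ n, R (π n) (π (n + 1)))
    (n : ℕ) : Relation.ReflTransGen R (π 0) (π n) := by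
  induction n with
  | zero => exact .refl
  | succ n ih => exact ih.tail (hπ n)

theorem outDegOne_of_not_outDegGeTwo {R : V → V → Prop} {v t : V} (ht : R v t)
    (h : ¬ OutDegGeTwo R v) : OutDegOne R v :=
  ⟨t, ht, fun t' ht' => by_contra fun hne => h ⟨t', t, hne, ht', ht⟩⟩

theorem exists_minimal_repeat [Finite V] (π : ℕ → V) :
    ∃ m d, 0 < d ∧ π (m + d) = π m ∧ Set.InjOn (fun i => π (m + i)) (Set.Iio d) := by
  classical
  have hrep : ∃ d, 0 < d ∧ ∃ m, π (m + d) = π m := by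
    obtain ⟨i, j, hij, heq⟩ := Finite.exists_ne_map_eq_of_infinite π
    rcases hij.lt_or_gt with h | h
    · exact ⟨j - i, by omega, i, by rw [Nat.add_sub_cancel' h.le, heq]⟩
    · exact ⟨i - j, by omega, j, by rw [Nat.add_sub_cancel' h.le, heq]⟩
  obtain ⟨hd, m, hm⟩ := Nat.find_spec hrep
  refine ⟨m, Nat.find hrep, hd, hm, fun i hi j hj hij => ?_⟩
  by_contra hne
  wlog hlt : i < j generalizing i j
  · exact this j hj i hi hij.symm (Ne.symm hne) (by omega)
  refine Nat.find_min hrep (m := j - i) (by simp only [Set.mem_Iio] at hj; omega)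
    ⟨by omega, m + i, ?_⟩
  rw [show m + i + (j - i) = m + j by omega]
  exact hij.symm

theorem isCycle_map_range {R : V → V → Prop} {f : ℕ → V} {d : ℕ} (hd : 0 < d)
    (hf : ∀ i, R (f i) (f (i + 1))) (hper : f d = f 0) (hinj : Set.InjOn f (Set.Iio d)) :
    IsCycle R ((List.range d).map f) := by
  obtain ⟨d, rfl⟩ : ∃ d', d = d' + 1 := ⟨d - 1, by omega⟩
  refine ⟨by simp, ?_, ?_, f 0, f d, ?_, ?_, ?_⟩
  · exact List.Nodup.map_on (fun i hi j hj => hinj (by simpa using hi) (by simpa using hj))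
      List.nodup_range
  · rw [List.Chain', List.isChain_map, List.isChain_range_succ]
    exact fun i _ => hf i
  · simp [List.range_succ_eq_map]
  · simp [List.range_succ]
  · exact hper ▸ hf d

theorem eq_add_mod_of_outDegOne {R : V → V → Prop} {π : ℕ → V}
    (hπ : ∀ n, R (π n) (π (n + 1))) {m d : ℕ} (hd : 0 < d) (hrep : π (m + d) = π m)
    (hone : ∀ i < d, OutDegOne R (π (m + i))) (k : ℕ) : π (m + k) = π (m + k % d) := by
  induction k with
  | zero => simp
  | succ k ih =>
    have hk : k % d < d := Nat.mod_lt k hd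
    obtain ⟨t, -, huniq⟩ := hone _ hk
    have hnext : R (π (m + k % d)) (π (m + k + 1)) := ih ▸ hπ (m + k)
    have hstep : π (m + (k + 1)) = π (m + (k % d + 1)) := by
      rw [← add_assoc, ← add_assoc, huniq _ hnext, huniq _ (hπ _)]
    rw [hstep, ← Nat.mod_add_mod]
    rcases (show k % d + 1 ≤ d by omega).lt_or_eq with hlt | heq
    · rw [Nat.mod_eq_of_lt hlt]
    · rw [heq, Nat.mod_self, add_zero, hrep]

/-- In a finite directed graph, if no non-sink-cycle is reachable from `s`, then every
infinite path starting at `s` eventually remains forever within a single sink-cycle. -/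
theorem no_nonSinkCycle_path_eventually_in_sinkCycle {V : Type} [Fintype V]
    (R : V → V → Prop) (s : V)
    (hno : ¬ ∃ (l : List V) (v : V), IsNonSinkCycle R l ∧ v ∈ l ∧
      Relation.ReflTransGen R s v)
    (π : ℕ → V) (h0 : π 0 = s) (hπ : ∀ n, R (π n) (π (n + 1))) :
    ∃ (N : ℕ) (C : List V), IsSinkCycle R C ∧ ∀ n, N ≤ n → π n ∈ C := by
  obtain ⟨m, d, hd, hrep, hinj⟩ := exists_minimal_repeat π
  set C := (List.range d).map fun i => π (m + i)
  have hcyc : IsCycle R C := isCycle_map_range hd (fun i => hπ (m + i)) hrep hinj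
  have hmem : ∀ i < d, π (m + i) ∈ C := fun i hi => List.mem_map_of_mem (List.mem_range.2 hi)
  have hone : ∀ i < d, OutDegOne R (π (m + i)) := fun i hi =>
    outDegOne_of_not_outDegGeTwo (hπ (m + i)) fun h2 =>
      hno ⟨C, _, ⟨hcyc, _, hmem i hi, h2⟩, hmem i hi, h0 ▸ reflTransGen_of_path hπ _⟩
  have hsink : ∀ v ∈ C, OutDegOne R v := by
    simpa only [C, List.forall_mem_map, List.mem_range] using hone
  refine ⟨m, C, ⟨hcyc, hsink⟩, fun n hn => ?_⟩
  obtain ⟨k, rfl⟩ := Nat.exists_eq_add_of_le hn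
  rw [eq_add_mod_of_outDegOne hπ hd hrep hone k]
  exact hmem _ (Nat.mod_lt k hd)
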